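/- arXiv:2107.08989 — 4 statements merged into one kernel-verified Lean document; each statement's English description precedes it below -/
import Mathlib

section
/- Let P : ℕ → ℕ → ℕ be the function determined by P(0,t) = 1 for every t ≥ 0, and, for every s ≥ 1 and t ≥ 1, P(s,t) = ∑_{i=1}^{⌈t/s⌉} P(s−1, t − s(i−1)). Then for every positive integer n, the number p(n) of partitions of n satisfies p(n) = ∑_{i=0}^{⌊n/2⌋} P(i, n+1−2i). -/
/-!
`P (s, t + 1)` counts the multisets of `s` natural numbers with sum at most `t`, i.e. the
partitions of numbers `≤ t` into at most `s` parts, padded with zeros. Indeed, subtracting the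
minimum `j` from each of `s + 1` such numbers and dropping one of the resulting zeros leaves `s`
numbers with sum at most `t - (s + 1) j`, which is the defining recursion of `P`.

A partition of `n` with `i` parts `≥ 2` is determined by these parts lowered by `2`: a multiset
of `i` natural numbers with sum at most `n - 2i`, while parts equal to `1` make up the rest.
-/

open Finset

namespace Multiset

theorem sum_map_add_const (m : Multiset ℕ) (j : ℕ) :
    (m.map (· + j)).sum = m.sum + card m * j := by
  simp [sum_map_add]

theorem map_add_map_sub_of_le {m : Multiset ℕ} {j : ℕ} (h : ∀ x ∈ m, j ≤ x) :
    (m.map (· - j)).map (· + j) = m := by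
  rw [map_map]
  conv_rhs => rw [← map_id m]
  exact map_congr rfl fun x hx => Nat.sub_add_cancel (h x hx)

theorem exists_eq_cons_map_add_of_ne_zero {m : Multiset ℕ} (hm : m ≠ 0) :
    ∃ (j : ℕ) (m' : Multiset ℕ), m = j ::ₘ m'.map (· + j) := by
  obtain ⟨j, hj, hmin⟩ := exists_min_image id hm
  obtain ⟨r, rfl⟩ := exists_cons_of_mem hj
  have hle : ∀ x ∈ r, j ≤ x := fun x hx => hmin x (mem_cons_of_mem hx)
  exact ⟨j, r.map (· - j), by rw [map_add_map_sub_of_le hle]⟩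

theorem le_of_mem_cons_map_add {j x : ℕ} {m : Multiset ℕ} (hx : x ∈ j ::ₘ m.map (· + j)) :
    j ≤ x := by
  simp only [mem_cons, mem_map] at hx
  rcases hx with rfl | ⟨y, -, rfl⟩ <;> omega

theorem sum_cons_map_add (j : ℕ) (m : Multiset ℕ) :
    (j ::ₘ m.map (· + j)).sum = m.sum + (card m + 1) * j := by
  rw [sum_cons, sum_map_add_const]
  ring

end Multiset

def cardEqSumLE (s t : ℕ) : Finset (Multiset ℕ) :=
  (((range (t + 1)).sym s).image (↑)).filter (fun m => m.sum ≤ t)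

theorem mem_cardEqSumLE {s t : ℕ} {m : Multiset ℕ} :
    m ∈ cardEqSumLE s t ↔ Multiset.card m = s ∧ m.sum ≤ t := by
  simp only [cardEqSumLE, mem_filter, mem_image, mem_sym_iff, mem_range]
  constructor
  · rintro ⟨⟨x, -, rfl⟩, h⟩
    exact ⟨x.2, h⟩
  · rintro ⟨hcard, hsum⟩
    refine ⟨⟨⟨m, hcard⟩, fun a ha => ?_, rfl⟩, hsum⟩
    exact Nat.lt_succ_of_le ((Multiset.le_sum_of_mem ha).trans hsum)

theorem card_cardEqSumLE_zero (t : ℕ) : #(cardEqSumLE 0 t) = 1 :=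
  card_eq_one.mpr ⟨0, ext fun m => by simp +contextual [mem_cardEqSumLE, Multiset.card_eq_zero]⟩

theorem card_cardEqSumLE_succ (s t : ℕ) :
    #(cardEqSumLE (s + 1) t) =
      ∑ j ∈ range (t / (s + 1) + 1), #(cardEqSumLE s (t - (s + 1) * j)) := by
  have hmem (j : ℕ) (m : Multiset ℕ) :
      (⟨j, m⟩ : Σ _ : ℕ, Multiset ℕ) ∈
          (range (t / (s + 1) + 1)).sigma (fun j => cardEqSumLE s (t - (s + 1) * j)) ↔
        Multiset.card m = s ∧ m.sum + (s + 1) * j ≤ t := by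
    rw [mem_sigma, mem_range, Nat.lt_succ_iff, Nat.le_div_iff_mul_le (by omega),
      mem_cardEqSumLE, mul_comm j]
    dsimp only
    omega
  rw [← card_sigma]
  symm
  refine card_bij (fun p _ => p.1 ::ₘ p.2.map (· + p.1)) ?_ ?_ ?_
  · rintro ⟨j, m⟩ h
    rw [hmem] at h
    rw [mem_cardEqSumLE, Multiset.sum_cons_map_add, Multiset.card_cons, Multiset.card_map, h.1]
    exact ⟨rfl, h.2⟩
  · rintro ⟨j, m⟩ - ⟨j', m'⟩ - h
    dsimp only at h
    obtain rfl : j = j' :=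
      le_antisymm (Multiset.le_of_mem_cons_map_add (h.symm ▸ Multiset.mem_cons_self _ _))
        (Multiset.le_of_mem_cons_map_add (h ▸ Multiset.mem_cons_self _ _))
    rw [Multiset.cons_inj_right, (Multiset.map_injective (add_left_injective j)).eq_iff] at h
    rw [h]
  · intro m hm
    rw [mem_cardEqSumLE] at hm
    obtain ⟨hcard, hsum⟩ := hm
    obtain ⟨j, m', rfl⟩ := Multiset.exists_eq_cons_map_add_of_ne_zero
      (Multiset.card_pos.mp (by rw [hcard]; exact s.succ_pos))
    rw [Multiset.card_cons, Multiset.card_map, Nat.succ_inj] at hcard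
    rw [Multiset.sum_cons_map_add, hcard] at hsum
    exact ⟨⟨j, m'⟩, (hmem j m').2 ⟨hcard, hsum⟩, rfl⟩

theorem apply_succ_eq_card_cardEqSumLE (P : ℕ → ℕ → ℕ) (h0 : ∀ t : ℕ, P 0 t = 1)
    (hrec : ∀ s t : ℕ, 1 ≤ s → 1 ≤ t →
      P s t = ∑ i ∈ Icc 1 (t ⌈/⌉ s), P (s - 1) (t - s * (i - 1)))
    (s t : ℕ) : P s (t + 1) = #(cardEqSumLE s t) := by
  induction s generalizing t with
  | zero => rw [h0, card_cardEqSumLE_zero]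
  | succ s ih =>
    have hceil : (t + 1) ⌈/⌉ (s + 1) = t / (s + 1) + 1 := by
      rw [Nat.ceilDiv_eq_add_pred_div, show t + 1 + (s + 1) - 1 = t + (s + 1) by omega,
        Nat.add_div_right _ s.succ_pos]
    rw [hrec _ _ (by omega) (by omega), card_cardEqSumLE_succ, hceil,
      ← Ico_add_one_right_eq_Icc, sum_Ico_eq_sum_range, Nat.add_sub_cancel]
    refine sum_congr rfl fun j hj => ?_
    have : (s + 1) * j ≤ t := by
      rw [mem_range, Nat.lt_succ_iff, Nat.le_div_iff_mul_le s.succ_pos] at hj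
      linarith
    rw [← ih, Nat.add_sub_cancel, Nat.add_sub_cancel_left]
    congr 1
    omega

theorem Nat.Partition.parts_eq_filter_add_replicate {n : ℕ} (p : n.Partition) :
    p.parts =
      p.parts.filter (2 ≤ ·) + Multiset.replicate (n - (p.parts.filter (2 ≤ ·)).sum) 1 := by
  have hones : p.parts.filter (¬2 ≤ ·) =
      Multiset.replicate (Multiset.card (p.parts.filter (¬2 ≤ ·))) 1 :=
    Multiset.eq_replicate_card.mpr fun b hb => by
      have := p.parts_pos (Multiset.mem_of_mem_filter hb)
      have := Multiset.of_mem_filter hb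
      omega
  have hsplit := Multiset.filter_add_not (2 ≤ ·) p.parts
  have hsum := congrArg Multiset.sum hsplit
  rw [p.parts_sum, Multiset.sum_add, hones, Multiset.sum_replicate, smul_eq_mul, mul_one] at hsum
  conv_lhs => rw [← hsplit, hones]
  congr 2
  omega

theorem card_partition_eq_sum_card_cardEqSumLE (n : ℕ) :
    Fintype.card n.Partition = ∑ i ∈ range (n / 2 + 1), #(cardEqSumLE i (n - 2 * i)) := by
  have hF (p : n.Partition) : p.parts.filter (2 ≤ ·) =
      ((p.parts.filter (2 ≤ ·)).map (· - 2)).map (· + 2) :=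
    (Multiset.map_add_map_sub_of_le fun _ hx => Multiset.of_mem_filter hx).symm
  rw [← card_univ, ← card_sigma]
  refine card_bij (fun p _ => ⟨Multiset.card (p.parts.filter (2 ≤ ·)),
    (p.parts.filter (2 ≤ ·)).map (· - 2)⟩) ?_ ?_ ?_
  · rintro p -
    have hsum : (p.parts.filter (2 ≤ ·)).sum ≤ n := by
      conv_rhs => rw [← p.parts_sum, p.parts_eq_filter_add_replicate]
      rw [Multiset.sum_add]
      exact Nat.le_add_right _ _
    rw [hF p, Multiset.sum_map_add_const, Multiset.card_map] at hsum
    rw [mem_sigma, mem_range, mem_cardEqSumLE, Multiset.card_map]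
    dsimp only
    omega
  · rintro p - q - h
    simp only [Sigma.mk.injEq, heq_eq_eq] at h
    ext1
    rw [p.parts_eq_filter_add_replicate, q.parts_eq_filter_add_replicate, hF p, hF q, h.2]
  · rintro ⟨i, m⟩ hm
    rw [mem_sigma, mem_range, mem_cardEqSumLE] at hm
    dsimp only at hm
    obtain ⟨hi, hcard, hsum⟩ := hm
    have hfilter (k : ℕ) :
        (m.map (· + 2) + Multiset.replicate k 1).filter (2 ≤ ·) = m.map (· + 2) := by
      rw [Multiset.filter_add, Multiset.filter_eq_self.mpr, Multiset.filter_eq_nil.mpr, add_zero]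
      · simp +contextual [Multiset.mem_replicate]
      · simp
    refine ⟨⟨m.map (· + 2) + Multiset.replicate (n - 2 * i - m.sum) 1, ?_, ?_⟩,
      mem_univ _, ?_⟩
    · simp only [Multiset.mem_add, Multiset.mem_map, Multiset.mem_replicate]
      rintro _ (⟨a, -, rfl⟩ | ⟨-, rfl⟩) <;> omega
    · rw [Multiset.sum_add, Multiset.sum_map_add_const, Multiset.sum_replicate, hcard, smul_eq_mul]
      omega
    · simp [hfilter, hcard, Multiset.map_map]

theorem partition_card_eq_sum_P_general (P : ℕ → ℕ → ℕ)
    (h0 : ∀ t : ℕ, P 0 t = 1)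
    (hrec : ∀ s t : ℕ, 1 ≤ s → 1 ≤ t →
      P s t = ∑ i ∈ Finset.Icc 1 (t ⌈/⌉ s), P (s - 1) (t - s * (i - 1)))
    (n : ℕ) :
    Fintype.card (Nat.Partition n) = ∑ i ∈ Finset.range (n / 2 + 1), P i (n + 1 - 2 * i) := by
  rw [card_partition_eq_sum_card_cardEqSumLE]
  refine sum_congr rfl fun i hi => ?_
  have hi : 2 * i ≤ n := by rw [mem_range] at hi; omega
  rw [show n + 1 - 2 * i = n - 2 * i + 1 by omega, apply_succ_eq_card_cardEqSumLE P h0 hrec]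

/-- If `P : ℕ → ℕ → ℕ` satisfies `P 0 t = 1` for all `t` and, for
`s ≥ 1`, `t ≥ 1`, `P s t = ∑_{i=1}^{⌈t/s⌉} P (s-1) (t - s*(i-1))`, then for every
positive `n` the number of partitions of `n` equals `∑_{i=0}^{⌊n/2⌋} P i (n+1-2i)`. -/
theorem partition_card_eq_sum_P (P : ℕ → ℕ → ℕ)
    (h0 : ∀ t : ℕ, P 0 t = 1)
    (hrec : ∀ s t : ℕ, 1 ≤ s → 1 ≤ t →
      P s t = ∑ i ∈ Finset.Icc 1 (t ⌈/⌉ s), P (s - 1) (t - s * (i - 1)))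
    (n : ℕ) (hn : 0 < n) :
    Fintype.card (Nat.Partition n) = ∑ i ∈ Finset.range (n / 2 + 1), P i (n + 1 - 2 * i) :=
  partition_card_eq_sum_P_general P h0 hrec n
end

section
/- Define a jump of order r (r ≥ 1) on a list of positive integers as the transformation taking a list a :: rest to the list (a − r) :: r :: rest, allowed only when a − r is not smaller than the last entry of the resulting list and r is not larger than any entry of rest. A non-ascending sequence of jumps is a finite sequence of jumps applied successively in which the orders of the jumps never increase. Then a list l of positive integers is obtainable from the singleton list [n] by some non-ascending sequence of jumps if and only if either l = [n], or l = a₁ :: a₂ :: ⋯ :: a_m with m ≥ 2, a₁ + a₂ + ⋯ + a_m = n, and 1 ≤ a₂ ≤ a₃ ≤ ⋯ ≤ a_m ≤ a₁. In particular, distinct lists obtained this way represent distinct partitions of n, so the lists reachable from [n] by non-ascending sequences of jumps are in bijection with the partitions of n. -/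
/-- A jump of order `r ≥ 1` transforms `a :: rest` into `(a - r) :: r :: rest`,
allowed only when `a - r` is at least the last entry of the resulting list and
`r` is at most every entry of `rest`. -/
def IsJump (r : ℕ) (l l' : List ℕ) : Prop :=
  1 ≤ r ∧ ∃ (a : ℕ) (rest : List ℕ),
    l = a :: rest ∧
    l' = (a - r) :: r :: rest ∧
    (r :: rest).getLast (List.cons_ne_nil _ _) ≤ a - r ∧
    ∀ x ∈ rest, r ≤ x

/-- `NAJumpSeq r l l'` : `l'` is obtainable from `l` by a (possibly empty) sequence of
jumps whose orders are at most `r` and never increase along the sequence. -/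
inductive NAJumpSeq : ℕ → List ℕ → List ℕ → Prop where
  | refl (r : ℕ) (l : List ℕ) : NAJumpSeq r l l
  | step (r r' : ℕ) (l l' l'' : List ℕ) (hr : r' ≤ r) (hj : IsJump r' l l')
      (htail : NAJumpSeq r' l' l'') : NAJumpSeq r l l''

/-!
A jump of order `r` puts `r` in front of entries that are all at least `r` and leaves a head that
is at least every entry, so jumps preserve the sum and the canonical shape `1 ≤ a₂ ≤ ⋯ ≤ aₘ ≤ a₁`.
Conversely, a canonical `a₁ :: a₂ :: a₃ :: ⋯` arises by a jump of order `a₂` from the canonical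
`(a₁ + a₂) :: a₃ :: ⋯`; unfolding this down to `[n]` and reading it forwards inserts `aₘ`, …, `a₂`
in turn, with non-increasing orders because the `aᵢ` are sorted.
-/

theorem List.getLastD_mono {α : Type*} [Preorder α] (l : List α) {a b : α} (hab : a ≤ b) :
    l.getLastD a ≤ l.getLastD b := by
  cases l with
  | nil => exact hab
  | cons c l => exact le_rfl

theorem List.le_getLastD_of_forall_le {α : Type*} [Preorder α] {l : List α} {a : α}
    (h : ∀ x ∈ l, a ≤ x) : a ≤ l.getLastD a := by
  cases l with
  | nil => exact le_rfl
  | cons c l =>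
    rw [List.getLastD_cons, ← List.getLast_eq_getLastD (List.cons_ne_nil c l)]
    exact h _ (List.getLast_mem _)

def IsCanonical : List ℕ → Prop
  | [] => False
  | a :: rest => rest.Pairwise (· ≤ ·) ∧ (∀ x ∈ rest, 1 ≤ x) ∧ rest.getLastD 0 ≤ a

theorem isCanonical_singleton (a : ℕ) : IsCanonical [a] := by
  simp [IsCanonical]

theorem IsJump.sum_eq {r : ℕ} {l l' : List ℕ} (h : IsJump r l l') : l'.sum = l.sum := by
  obtain ⟨-, a, rest, rfl, rfl, hlast, hrest⟩ := h
  rw [List.getLast_eq_getLastD] at hlast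
  have := (List.le_getLastD_of_forall_le hrest).trans hlast
  simp only [List.sum_cons]
  omega

theorem IsJump.isCanonical {r : ℕ} {l l' : List ℕ} (h : IsJump r l l') (hl : IsCanonical l) :
    IsCanonical l' := by
  obtain ⟨hr, a, rest, rfl, rfl, hlast, hrest⟩ := h
  obtain ⟨hsorted, hpos, -⟩ := hl
  rw [List.getLast_eq_getLastD] at hlast
  refine ⟨List.pairwise_cons.2 ⟨hrest, hsorted⟩, ?_, by rwa [List.getLastD_cons]⟩
  simpa only [List.forall_mem_cons] using ⟨hr, hpos⟩

theorem IsCanonical.isJump {a b : ℕ} {rest : List ℕ} (h : IsCanonical (a :: b :: rest)) :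
    IsJump b ((a + b) :: rest) (a :: b :: rest) := by
  obtain ⟨hsorted, hpos, hlast⟩ := h
  rw [List.getLastD_cons] at hlast
  refine ⟨hpos b List.mem_cons_self, a + b, rest, rfl, by rw [Nat.add_sub_cancel], ?_,
    (List.pairwise_cons.1 hsorted).1⟩
  rwa [List.getLast_eq_getLastD, Nat.add_sub_cancel]

theorem IsCanonical.merge {a b : ℕ} {rest : List ℕ} (h : IsCanonical (a :: b :: rest)) :
    IsCanonical ((a + b) :: rest) := by
  obtain ⟨hsorted, hpos, hlast⟩ := h
  refine ⟨(List.pairwise_cons.1 hsorted).2, fun x hx => hpos x (List.mem_cons_of_mem b hx), ?_⟩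
  rw [List.getLastD_cons] at hlast
  calc rest.getLastD 0 ≤ rest.getLastD b := rest.getLastD_mono (Nat.zero_le b)
    _ ≤ a := hlast
    _ ≤ a + b := Nat.le_add_right a b

theorem NAJumpSeq.invariant {P : List ℕ → Prop} (hP : ∀ r l l', IsJump r l l' → P l → P l')
    {r : ℕ} {l l' : List ℕ} (h : NAJumpSeq r l l') (hl : P l) : P l' := by
  induction h with
  | refl => exact hl
  | step _ r' _ _ _ _ hj _ ih => exact ih (hP r' _ _ hj hl)

theorem NAJumpSeq.isCanonical_of_singleton {r n : ℕ} {l : List ℕ} (h : NAJumpSeq r [n] l) :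
    IsCanonical l ∧ l.sum = n :=
  h.invariant (P := fun l => IsCanonical l ∧ l.sum = n)
    (fun _ _ _ hj ⟨hl, hsum⟩ => ⟨hj.isCanonical hl, hj.sum_eq.trans hsum⟩)
    ⟨isCanonical_singleton n, List.sum_singleton⟩

/-- `a :: rest` is built from `[a + rest.sum]` by inserting the entries of `rest` from the last
one to the first, so the induction on `rest` runs over the remaining sequence of jumps. -/
theorem NAJumpSeq.singleton_of_isCanonical_cons {r a : ℕ} {rest l : List ℕ}
    (hcan : IsCanonical (a :: rest)) (hr : rest.getLastD 0 ≤ r)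
    (h : NAJumpSeq (rest.headD r) (a :: rest) l) : NAJumpSeq r [a + rest.sum] l := by
  induction rest generalizing a with
  | nil => simpa using h
  | cons b rest ih =>
    have hb : b ≤ rest.headD r := by
      cases rest with
      | nil => simpa using hr
      | cons c rest => exact (List.pairwise_cons.1 hcan.1).1 c List.mem_cons_self
    have hr' : rest.getLastD 0 ≤ r :=
      (rest.getLastD_mono (Nat.zero_le b)).trans (by rwa [List.getLastD_cons] at hr)
    rw [List.sum_cons, ← add_assoc]
    exact ih hcan.merge hr' (.step _ b _ _ _ hb hcan.isJump h)

theorem IsCanonical.naJumpSeq_singleton {l : List ℕ} (hl : IsCanonical l) :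
    NAJumpSeq l.sum [l.sum] l := by
  obtain ⟨a, rest, rfl⟩ := List.exists_cons_of_ne_nil (l := l) (by rintro rfl; exact hl)
  have hr : rest.getLastD 0 ≤ (a :: rest).sum := hl.2.2.trans (by simp)
  exact NAJumpSeq.singleton_of_isCanonical_cons hl hr (.refl _ _)

theorem reachable_iff_isCanonical (n : ℕ) (l : List ℕ) :
    (∃ r, NAJumpSeq r [n] l) ↔ IsCanonical l ∧ l.sum = n :=
  ⟨fun ⟨_, h⟩ => h.isCanonical_of_singleton, fun ⟨hl, hsum⟩ => ⟨n, hsum ▸ hl.naJumpSeq_singleton⟩⟩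

theorem isCanonical_and_sum_eq_iff (n : ℕ) (l : List ℕ) :
    IsCanonical l ∧ l.sum = n ↔
      l = [n] ∨
        ∃ (a : ℕ) (rest : List ℕ),
          l = a :: rest ∧ rest ≠ [] ∧ l.sum = n ∧
          List.Pairwise (· ≤ ·) rest ∧ (∀ x ∈ rest, 1 ≤ x) ∧ rest.getLastD 0 ≤ a := by
  constructor
  · rintro ⟨hl, hsum⟩
    match l, hl with
    | [a], _ => exact .inl (by simpa using hsum)
    | a :: b :: rest, ⟨hsorted, hpos, hlast⟩ =>
      exact .inr ⟨a, b :: rest, rfl, List.cons_ne_nil _ _, hsum, hsorted, hpos, hlast⟩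
  · rintro (rfl | ⟨a, rest, rfl, -, hsum, hsorted, hpos, hlast⟩)
    · exact ⟨isCanonical_singleton n, List.sum_singleton⟩
    · exact ⟨⟨hsorted, hpos, hlast⟩, hsum⟩

theorem reachable_iff_partition_general (n : ℕ) (l : List ℕ) :
    (∃ r : ℕ, NAJumpSeq r [n] l) ↔
      l = [n] ∨
        ∃ (a : ℕ) (rest : List ℕ),
          l = a :: rest ∧ rest ≠ [] ∧ l.sum = n ∧
          List.Pairwise (· ≤ ·) rest ∧ (∀ x ∈ rest, 1 ≤ x) ∧ rest.getLastD 0 ≤ a :=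
  (reachable_iff_isCanonical n l).trans (isCanonical_and_sum_eq_iff n l)

/-- A list `l` of positive integers is obtainable from `[n]` by some
non-ascending sequence of jumps iff `l = [n]` or `l = a :: rest` with `rest ≠ []`,
total sum `n`, and `1 ≤ a₂ ≤ a₃ ≤ ⋯ ≤ aₘ ≤ a` (i.e. `rest` is sorted non-decreasingly,
its entries are positive, and its last entry is at most `a`). -/
theorem reachable_iff_partition (n : ℕ) (hn : 1 ≤ n) (l : List ℕ) :
    (∃ r : ℕ, NAJumpSeq r [n] l) ↔
      l = [n] ∨
        ∃ (a : ℕ) (rest : List ℕ),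
          l = a :: rest ∧ rest ≠ [] ∧ l.sum = n ∧
          List.Pairwise (· ≤ ·) rest ∧ (∀ x ∈ rest, 1 ≤ x) ∧ rest.getLastD 0 ≤ a :=
  reachable_iff_partition_general n l
end

section
/- For every positive integer n, the number of divisors d(n) of n satisfies d(n) = ∑_π (−1)^{(#π)+1} · λ(π), where the sum ranges over all partitions π of n into distinct parts, #π denotes the number of parts of π, and λ(π) denotes the smallest part of π. Equivalently, the sum of the smallest parts of the partitions of n into distinct parts having an odd number of parts, minus the sum of the smallest parts of the partitions of n into distinct parts having an even number of parts, equals d(n). -/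
/-!
Write `(q^m; q)_L = ∏_{i < L} (1 - q^(m+i))`. Expanding the product, the coefficient of `q^n` in
`(q^m; q)_L` (for `L` large) is `∑ (-1)^#π` over the partitions `π` of `n` into distinct parts
`≥ m`; summing over `m = 1, …, n` counts each `π` exactly `λ(π)` times, so the right-hand side is
the coefficient of `q^n` in `∑_m (1 - (q^m; q)_n)`.

Telescoping `1 - (q^m; q)_N = ∑_{L < N} q^(m+L) (q^m; q)_L` and summing over `m` turns this into
`∑_L q^(L+1) ∑_{s < K} q^s (q^(s+1); q)_L`. The inner sum is `1 / (1 - q^(L+1))` modulo `q^K`: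
`(1 - q^(L+1)) ∑_{s < K} q^s (q^(s+1); q)_L = (1 - q^K) (q^(K+1); q)_L` telescopes once
`(q^(s+1); q)_(L+1)` is expanded by splitting off either its first or its last factor. Hence the
coefficient of `q^n` is the number of `L + 1` dividing `n`.
-/

/-- The smallest part of a partition (the head of its parts sorted increasingly;
`0` for the empty partition, which does not occur for `n ≥ 1`). -/
def Nat.Partition.minPart {n : ℕ} (π : Nat.Partition n) : ℕ :=
  (π.parts.sort (· ≤ ·)).headI

open Finset Polynomial

theorem Nat.card_divisors_eq_card_filter_range (n : ℕ) :
    n.divisors.card = #{L ∈ range n | L + 1 ∣ n} := by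
  rw [Nat.divisors, range_eq_Ico, show Ico 1 (n + 1) = Ico (0 + 1) (n + 1) from rfl,
    ← map_add_right_Ico, filter_map, card_map]
  rfl

namespace Nat.Partition

theorem parts_ne_zero {n : ℕ} (π : n.Partition) (hn : n ≠ 0) : π.parts ≠ 0 := by
  rintro h
  simp [← π.parts_sum, h] at hn

theorem le_minPart_iff {n : ℕ} (π : n.Partition) (hn : n ≠ 0) {m : ℕ} :
    m ≤ π.minPart ↔ ∀ p ∈ π.parts, m ≤ p := by
  have hsort := π.parts.pairwise_sort (· ≤ ·)
  have hcoe := π.parts.sort_eq (· ≤ ·)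
  unfold minPart
  cases hl : π.parts.sort (· ≤ ·) with
  | nil => exact (π.parts_ne_zero hn (hl ▸ hcoe).symm).elim
  | cons a t =>
    rw [hl] at hsort hcoe
    rw [← hcoe]
    simp only [List.pairwise_cons] at hsort
    simp only [List.headI_cons, Multiset.mem_coe, List.mem_cons, forall_eq_or_imp]
    exact ⟨fun h => ⟨h, fun p hp => h.trans (hsort.1 p hp)⟩, And.left⟩

theorem card_filter_forall_le_parts {n : ℕ} (π : n.Partition) (hn : n ≠ 0) :
    #{s ∈ range n | ∀ p ∈ π.parts, s + 1 ≤ p} = π.minPart := by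
  obtain ⟨p, hp⟩ := Multiset.exists_mem_of_ne_zero (π.parts_ne_zero hn)
  have hle : π.minPart ≤ n := ((π.le_minPart_iff hn).mp le_rfl p hp).trans (π.le_of_mem_parts hp)
  simp_rw [← π.le_minPart_iff hn]
  convert card_range π.minPart
  ext s
  simp only [mem_filter, mem_range]
  omega

theorem sum_distincts_filter_le_eq_sum_powerset {M : Type*} [AddCommMonoid M] {n m L : ℕ}
    (hm : 0 < m) (hn : n < m + L) (f : ℕ → M) :
    ∑ π ∈ distincts n with ∀ p ∈ π.parts, m ≤ p, f (Multiset.card π.parts) =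
      ∑ t ∈ (Ico m (m + L)).powerset with t.sum id = n, f #t := by
  symm
  refine sum_bij (fun t ht => ⟨t.val, fun hp => ?_, ?_⟩) (fun t ht => ?_)
    (fun t₁ _ t₂ _ h => ?_) (fun π hπ => ?_) (fun _ _ => rfl)
  · simp only [mem_filter, mem_powerset] at ht
    have := (mem_Ico.mp (ht.1 hp)).1
    omega
  · exact (sum_val t).trans (mem_filter.mp ht).2
  · simp only [mem_filter, mem_powerset, distincts, mem_univ, true_and] at ht ⊢
    exact ⟨t.nodup, fun p hp => (mem_Ico.mp (ht.1 hp)).1⟩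
  · exact val_injective (congrArg parts h)
  · simp only [mem_filter, distincts, mem_univ, true_and] at hπ
    refine ⟨⟨π.parts, hπ.1⟩, ?_, rfl⟩
    simp only [mem_filter, mem_powerset]
    refine ⟨fun p hp => mem_Ico.mpr ⟨hπ.2 p hp, ?_⟩, (sum_val _).symm.trans π.parts_sum⟩
    have := π.le_of_mem_parts hp
    omega

end Nat.Partition

section
variable {R : Type*} [CommRing R]

noncomputable def qPochhammer (m L : ℕ) : R[X] :=
  ∏ i ∈ range L, (1 - X ^ (m + i))

theorem qPochhammer_succ (m L : ℕ) :
    (qPochhammer m (L + 1) : R[X]) = qPochhammer m L * (1 - X ^ (m + L)) :=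
  prod_range_succ _ _

theorem qPochhammer_succ' (m L : ℕ) :
    (qPochhammer m (L + 1) : R[X]) = (1 - X ^ m) * qPochhammer (m + 1) L := by
  rw [qPochhammer, prod_range_succ', qPochhammer, mul_comm, add_zero]
  simp only [add_assoc, add_comm 1]

theorem qPochhammer_eq_prod_Ico (m L : ℕ) :
    (qPochhammer m L : R[X]) = ∏ j ∈ Ico m (m + L), (1 - X ^ j) := by
  rw [prod_Ico_eq_prod_range, Nat.add_sub_cancel_left, qPochhammer]

theorem X_pow_dvd_qPochhammer_sub_one (m L : ℕ) : (X ^ m : R[X]) ∣ qPochhammer m L - 1 := by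
  induction L with
  | zero => simp [qPochhammer]
  | succ L ih =>
    rw [qPochhammer_succ, pow_add, show ∀ a b c : R[X], a * (1 - c * b) - 1 = (a - 1) - c * (b * a)
      by intros; ring]
    exact dvd_sub ih (dvd_mul_right _ _)

theorem one_sub_qPochhammer (m N : ℕ) :
    1 - (qPochhammer m N : R[X]) = ∑ L ∈ range N, X ^ (m + L) * qPochhammer m L := by
  induction N with
  | zero => simp [qPochhammer]
  | succ N ih => rw [sum_range_succ, ← ih, qPochhammer_succ]; ring

theorem sum_one_sub_qPochhammer (n N : ℕ) :
    ∑ s ∈ range n, (1 - (qPochhammer (s + 1) N : R[X])) =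
      ∑ L ∈ range N, X ^ (L + 1) * ∑ s ∈ range n, X ^ s * qPochhammer (s + 1) L := by
  simp_rw [one_sub_qPochhammer, mul_sum, ← mul_assoc, ← pow_add]
  rw [sum_comm]
  refine sum_congr rfl fun s _ => sum_congr rfl fun L _ => ?_
  ring_nf

theorem one_sub_X_pow_mul_sum_qPochhammer (M K : ℕ) :
    (1 - X ^ (M + 1)) * ∑ s ∈ range K, X ^ s * (qPochhammer (s + 1) M : R[X]) =
      (1 - X ^ K) * qPochhammer (K + 1) M := by
  induction K with
  | zero => simp
  | succ K ih =>
    have h := (qPochhammer_succ (R := R) (K + 1) M).symm.trans (qPochhammer_succ' (K + 1) M)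
    rw [sum_range_succ, mul_add, ih]
    linear_combination h

theorem coeff_eq_ite_dvd_of_X_pow_dvd {p : R[X]} {d K : ℕ} (hd : 0 < d)
    (h : X ^ K ∣ (1 - X ^ d) * p - 1) {j : ℕ} (hj : j < K) :
    p.coeff j = if d ∣ j then 1 else 0 := by
  induction j using Nat.strong_induction_on with
  | _ j ih =>
    have hj' := X_pow_dvd_iff.mp h j hj
    rw [coeff_sub, sub_mul, one_mul, coeff_sub, coeff_X_pow_mul', coeff_one] at hj'
    rcases Nat.eq_zero_or_pos j with rfl | hj0
    · simpa [hd.ne', sub_eq_zero] using hj'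
    · by_cases hdj : d ≤ j
      · rw [if_pos hdj, ih (j - d) (by omega) (by omega), if_neg hj0.ne', sub_zero,
          sub_eq_zero] at hj'
        simp only [hj', Nat.dvd_sub_iff_left hdj dvd_rfl]
      · simp only [if_neg hdj, if_neg hj0.ne', sub_zero] at hj'
        rw [hj', if_neg (fun hdvd => hdj (Nat.le_of_dvd hj0 hdvd))]

theorem coeff_sum_X_pow_mul_qPochhammer (M K : ℕ) {j : ℕ} (hj : j < K) :
    (∑ s ∈ range K, X ^ s * (qPochhammer (s + 1) M : R[X])).coeff j =
      if M + 1 ∣ j then 1 else 0 := by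
  refine coeff_eq_ite_dvd_of_X_pow_dvd M.succ_pos ?_ hj
  rw [one_sub_X_pow_mul_sum_qPochhammer, show ∀ a b : R[X], (1 - a) * b - 1 = (b - 1) - a * b by
    intros; ring]
  exact dvd_sub ((pow_dvd_pow X K.le_succ).trans (X_pow_dvd_qPochhammer_sub_one _ _))
    (dvd_mul_right _ _)

theorem coeff_X_pow_mul_sum_qPochhammer (L : ℕ) {n K : ℕ} (hn : 0 < n) (hK : n ≤ K) :
    (X ^ (L + 1) * ∑ s ∈ range K, X ^ s * (qPochhammer (s + 1) L : R[X])).coeff n =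
      if L + 1 ∣ n then 1 else 0 := by
  rw [coeff_X_pow_mul']
  by_cases hle : L + 1 ≤ n
  · simp only [if_pos hle, coeff_sum_X_pow_mul_qPochhammer L K (j := n - (L + 1)) (by omega),
      Nat.dvd_sub_iff_left hle dvd_rfl]
  · rw [if_neg hle, if_neg fun hdvd => hle (Nat.le_of_dvd hn hdvd)]

theorem coeff_prod_one_sub_X_pow (s : Finset ℕ) (n : ℕ) :
    (∏ j ∈ s, (1 - X ^ j : R[X])).coeff n = ∑ t ∈ s.powerset with t.sum id = n, (-1) ^ #t := by
  simp_rw [sub_eq_add_neg, prod_one_add, prod_neg (fun i => (X : R[X]) ^ i),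
    prod_pow_eq_pow_sum _ (fun i => i), ← C_1, ← C_neg, ← C_pow, finsetSum_coeff,
    coeff_C_mul_X_pow, sum_filter, id]
  exact sum_congr rfl fun t _ => if_congr eq_comm rfl rfl

theorem coeff_qPochhammer {n m L : ℕ} (hm : 0 < m) (hn : n < m + L) :
    (qPochhammer m L : R[X]).coeff n =
      ∑ π ∈ Nat.Partition.distincts n with ∀ p ∈ π.parts, m ≤ p, (-1) ^ Multiset.card π.parts := by
  rw [qPochhammer_eq_prod_Ico, coeff_prod_one_sub_X_pow,
    Nat.Partition.sum_distincts_filter_le_eq_sum_powerset hm hn]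

end

/-- **Uchimura–Bressoud–Wang.** For every positive integer `n`,
`d(n) = ∑_π (-1)^(#π + 1) · λ(π)`, the sum ranging over partitions `π` of `n`
into distinct parts, where `#π` is the number of parts and `λ(π)` the smallest part. -/
theorem card_divisors_eq_alternating_sum_min_parts (n : ℕ) (hn : 0 < n) :
    ((n.divisors.card : ℤ)) =
      ∑ π ∈ Nat.Partition.distincts n,
        (-1 : ℤ) ^ (Multiset.card π.parts + 1) * (π.minPart : ℤ) := by
  calc (n.divisors.card : ℤ)
      = ∑ L ∈ range n, if L + 1 ∣ n then 1 else 0 := by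
        rw [Nat.card_divisors_eq_card_filter_range, natCast_card_filter]
    _ = (∑ L ∈ range n,
          X ^ (L + 1) * ∑ s ∈ range n, X ^ s * (qPochhammer (s + 1) L : ℤ[X])).coeff n := by
        rw [finsetSum_coeff]
        exact sum_congr rfl fun L _ => (coeff_X_pow_mul_sum_qPochhammer L hn le_rfl).symm
    _ = ∑ s ∈ range n, -(qPochhammer (s + 1) n : ℤ[X]).coeff n := by
        rw [← sum_one_sub_qPochhammer, finsetSum_coeff]
        simp [coeff_one, hn.ne']
    _ = ∑ s ∈ range n, ∑ π ∈ Nat.Partition.distincts n with ∀ p ∈ π.parts, s + 1 ≤ p,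
          (-1 : ℤ) ^ (Multiset.card π.parts + 1) := by
        refine sum_congr rfl fun s _ => ?_
        rw [coeff_qPochhammer s.succ_pos (by omega), ← sum_neg_distrib]
        simp_rw [pow_succ, mul_neg_one]
    _ = _ := by
        simp_rw [sum_filter]
        rw [sum_comm]
        refine sum_congr rfl fun π _ => ?_
        rw [← sum_filter, sum_const, π.card_filter_forall_le_parts hn.ne', nsmul_eq_mul, mul_comm]
end

section
/- Let t(n) = n(n+1)/2 denote the n-th triangular number. For integers i > j ≥ 1 with i = j + 1, define the t(i) × t(j) integer matrix A_{i,j} by A_{i,j}[k,l] = −1 if k = l, A_{i,j}[k,l] = 1 if k − i = l, and A_{i,j}[k,l] = 0 otherwise (indices 1 ≤ k ≤ t(i), 1 ≤ l ≤ t(j)). For i ≥ 1 define the integer vector I_i of length t(i) by I_i[k] = 1 if k = t(i−1)+1 and I_i[k] = 0 otherwise. Define vectors E_n of length t(n) recursively by E_1 = I_1 and E_n = A_{n,n−1} E_{n−1} + n · I_n for n ≥ 2 (equivalently, E_n = ∑_{m=1}^{n} m · A_{n,n−1} A_{n−1,n−2} ⋯ A_{m+1,m} I_m). Then for every positive integer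 n, the entry of E_n in position t(n−1)+1 equals d(n), the number of positive divisors of n. -/
/-- The `n`-th triangular number `t(n) = n(n+1)/2`. -/
def tri (n : ℕ) : ℕ := n * (n + 1) / 2

/-- The `t(i) × t(j)` integer matrix `A_{i,j}` (indices written `0`-based):
`A[k,l] = -1` if `k = l`, `A[k,l] = 1` if `k - i = l` (i.e. `k = l + i`), else `0`. -/
def Amat (i j : ℕ) : Matrix (Fin (tri i)) (Fin (tri j)) ℤ := fun k l =>
  if (k : ℕ) = (l : ℕ) then -1 else if (k : ℕ) = (l : ℕ) + i then 1 else 0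

/-- The vector `I_i` of length `t(i)`: its entry in (1-based) position `t(i-1)+1`
(i.e. `0`-based index `t(i-1)`) is `1`, and all other entries are `0`. -/
def Ivec (i : ℕ) : Fin (tri i) → ℤ := fun k =>
  if (k : ℕ) = tri (i - 1) then 1 else 0

/-- The vectors `E_n` of length `t(n)`, defined by `E_1 = I_1` and
`E_n = A_{n,n-1} E_{n-1} + n · I_n` for `n ≥ 2`. -/
def Evec : (n : ℕ) → Fin (tri n) → ℤ
  | 0 => fun _ => 0
  | 1 => Ivec 1
  | (n + 2) => (Amat (n + 2) (n + 1)).mulVec (Evec (n + 1)) + ((n + 2 : ℕ) : ℤ) • Ivec (n + 2)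

/-!
Read backwards, as `T_n = ∑_k E_n[k] X ^ (t(n) - k)`, the matrix `A_{n,n-1}` acts as multiplication
by `1 - X ^ n` and `I_n` becomes `X ^ n`. Hence `T_n = ∑_{m ≤ n} m X ^ m ∏_{m < i ≤ n} (1 - X ^ i)`,
and the entry in question is the coefficient of `X ^ n` in `T_n`. With `q = X`, `T_n` is `z ∂_z H`
at `z = q`, where `H(z) = ∑_{j ≤ n} z ^ j ∏_{j < i ≤ n} (1 - q ^ i)` satisfies
`H(q z) = (1 - z) H(z) + z ^ (n + 1)`. Modulo `q ^ (n + 1)`, this functional equation and its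
`z`-derivative at `z = q, q², …, q ^ (n + 1)` telescope, as for the logarithmic derivative of
`(q; q)_∞ / (z; q)_∞`, to `T_n ≡ ∑_{m ≤ n} q ^ m / (1 - q ^ m) = ∑_r d(r) q ^ r`.
-/

open Polynomial Finset

section Euler

variable {R S : Type*} [CommRing R] [CommRing S]

/-- `eulerH q n z = ∑_{j ≤ n} z ^ j ∏_{j < i ≤ n} (1 - q ^ i)`, a truncation of
`(q; q)_∞ / (z; q)_∞`, and `eulerD q n z = z ∂_z eulerH q n z`. -/
def eulerH (q : R) : ℕ → R → R
  | 0, _ => 1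
  | n + 1, z => (1 - q ^ (n + 1)) * eulerH q n z + z ^ (n + 1)

def eulerD (q : R) : ℕ → R → R
  | 0, _ => 0
  | n + 1, z => (1 - q ^ (n + 1)) * eulerD q n z + (n + 1) * z ^ (n + 1)

theorem eulerH_mul_left (q z : R) (n : ℕ) :
    eulerH q n (q * z) = (1 - z) * eulerH q n z + z ^ (n + 1) := by
  induction n with
  | zero => simp only [eulerH]; ring
  | succ n ih => simp only [eulerH, ih]; ring

theorem eulerD_mul_left (q z : R) (n : ℕ) :
    eulerD q n (q * z) = (1 - z) * eulerD q n z - z * eulerH q n z + (n + 1) * z ^ (n + 1) := by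
  induction n with
  | zero => simp only [eulerD, eulerH]; ring
  | succ n ih => simp only [eulerD, eulerH, ih]; push_cast; ring

theorem eulerH_self (q : R) (n : ℕ) : eulerH q n q = 1 := by
  simpa using eulerH_mul_left q 1 n

theorem eulerD_zero_right (q : R) (n : ℕ) : eulerD q n 0 = 0 := by
  induction n with
  | zero => rfl
  | succ n ih => simp [eulerD, ih]

theorem map_eulerD (f : R →+* S) (q z : R) (n : ℕ) :
    f (eulerD q n z) = eulerD (f q) n (f z) := by
  induction n with
  | zero => simp [eulerD]
  | succ n ih => simp [eulerD, ih]

end Euler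

section Lambert

variable {R : Type*} [CommRing R] {q : R} {N : ℕ}

/-- `q ^ k / (1 - q ^ k)`, truncated to the exponents `q ^ (k * i)` with `i ≤ N`. -/
def lambertTerm (q : R) (N k : ℕ) : R := ∑ i ∈ Ico 1 (N + 1), (q ^ k) ^ i

theorem pow_pow_succ_eq_zero (hq : q ^ (N + 1) = 0) {k : ℕ} (hk : k ≠ 0) :
    (q ^ k) ^ (N + 1) = 0 := by
  rw [← pow_mul, mul_comm, pow_mul, hq, zero_pow hk]

theorem one_sub_mul_lambertTerm (hq : q ^ (N + 1) = 0) {k : ℕ} (hk : k ≠ 0) :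
    (1 - q ^ k) * lambertTerm q N k = q ^ k := by
  have h := geom_sum_Ico_mul (q ^ k) (Nat.le_add_left 1 N)
  rw [pow_pow_succ_eq_zero hq hk] at h
  rw [lambertTerm]
  linear_combination -h

/-- The functional equations at `z = q ^ k`: the product inverts
`eulerH q N (q ^ k) = ∏_{m < k} (1 - q ^ m)`, and each step `k ↦ k + 1` removes the term
`q ^ k / (1 - q ^ k)` from the normalised `eulerD`. -/
theorem eulerH_eulerD_pow_normalized (hq : q ^ (N + 1) = 0) {k : ℕ} (hk : 1 ≤ k) :
    (∏ m ∈ Ico 1 k, (1 + lambertTerm q N m)) * eulerH q N (q ^ k) = 1 ∧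
      (∏ m ∈ Ico 1 k, (1 + lambertTerm q N m)) * eulerD q N (q ^ k) =
        eulerD q N q - ∑ m ∈ Ico 1 k, lambertTerm q N m := by
  induction k, hk using Nat.le_induction with
  | base => simp [eulerH_self]
  | succ k hk ih =>
    obtain ⟨ihH, ihD⟩ := ih
    have hk0 : k ≠ 0 := by omega
    have hG := one_sub_mul_lambertTerm hq hk0
    have hz := pow_pow_succ_eq_zero hq hk0
    rw [prod_Ico_succ_top hk, sum_Ico_succ_top hk, pow_succ', eulerH_mul_left,
      eulerD_mul_left, hz]
    constructor
    · linear_combination (1 + lambertTerm q N k) * (1 - q ^ k) * ihH + hG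
    · linear_combination (1 + lambertTerm q N k) * (1 - q ^ k) * ihD
        - (1 + lambertTerm q N k) * q ^ k * ihH
        + (eulerD q N q - ∑ m ∈ Ico 1 k, lambertTerm q N m + 1) * hG

theorem eulerD_self_eq_sum_lambertTerm (hq : q ^ (N + 1) = 0) :
    eulerD q N q = ∑ m ∈ Ico 1 (N + 1), lambertTerm q N m := by
  have h := (eulerH_eulerD_pow_normalized hq (Nat.le_add_left 1 N)).2
  rw [hq, eulerD_zero_right, mul_zero] at h
  exact sub_eq_zero.mp h.symm

end Lambert

theorem coeff_sum_lambertTerm_X (N : ℕ) :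
    (∑ m ∈ Ico 1 (N + 1), lambertTerm (X : ℤ[X]) N m).coeff N = #N.divisors := by
  simp only [lambertTerm, ← pow_mul, finsetSum_coeff, coeff_X_pow, ← sum_product', sum_boole]
  have h : {p ∈ Ico 1 (N + 1) ×ˢ Ico 1 (N + 1) | N = p.1 * p.2} = N.divisorsAntidiagonal := by
    ext ⟨m, i⟩
    simp only [mem_filter, mem_product, mem_Ico, Nat.mem_divisorsAntidiagonal]
    constructor
    · rintro ⟨⟨⟨hm, -⟩, hi, -⟩, rfl⟩
      exact ⟨rfl, by positivity⟩
    · rintro ⟨rfl, hN⟩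
      have hm := Nat.pos_of_ne_zero (left_ne_zero_of_mul hN)
      have hi := Nat.pos_of_ne_zero (right_ne_zero_of_mul hN)
      refine ⟨⟨⟨hm, ?_⟩, hi, ?_⟩, rfl⟩ <;> nlinarith
  rw [h, ← Nat.map_div_right_divisors, card_map]

theorem coeff_eulerD_X_self (N : ℕ) : (eulerD (X : ℤ[X]) N X).coeff N = #N.divisors := by
  set I : Ideal ℤ[X] := Ideal.span {X ^ (N + 1)}
  have hX : Ideal.Quotient.mk I X ^ (N + 1) = 0 := by
    rw [← map_pow, Ideal.Quotient.eq_zero_iff_mem]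
    exact Ideal.mem_span_singleton_self _
  have h : Ideal.Quotient.mk I (eulerD X N X) =
      Ideal.Quotient.mk I (∑ m ∈ Ico 1 (N + 1), lambertTerm X N m) := by
    simp only [map_eulerD, eulerD_self_eq_sum_lambertTerm hX, lambertTerm, map_sum, map_pow]
  rw [Ideal.Quotient.eq, Ideal.mem_span_singleton, X_pow_dvd_iff] at h
  rw [← coeff_sum_lambertTerm_X, ← sub_eq_zero, ← coeff_sub]
  exact h N N.lt_succ_self

theorem tri_succ (n : ℕ) : tri (n + 1) = tri n + (n + 1) := by
  simp only [tri]
  rw [show (n + 1) * (n + 1 + 1) = n * (n + 1) + (n + 1) * 2 by ring,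
    Nat.add_mul_div_right _ _ two_pos]

noncomputable def revPoly (n : ℕ) (v : Fin (tri n) → ℤ) : ℤ[X] := ∑ k, C (v k) * X ^ (tri n - k)

theorem coeff_revPoly (n : ℕ) (v : Fin (tri n) → ℤ) (k : Fin (tri n)) :
    (revPoly n v).coeff (tri n - k) = v k := by
  rw [revPoly, finsetSum_coeff, sum_eq_single k]
  · simp
  · intro j _ hjk
    rw [coeff_C_mul_X_pow, if_neg]
    omega
  · simp

theorem revPoly_add_smul (n : ℕ) (v w : Fin (tri n) → ℤ) (c : ℤ) :
    revPoly n (v + c • w) = revPoly n v + C c * revPoly n w := by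
  simp [revPoly, sum_add_distrib, mul_sum, add_mul, mul_assoc]

theorem sum_Amat_col (n : ℕ) (l : Fin (tri n)) :
    ∑ k : Fin (tri (n + 1)), C (Amat (n + 1) n k l) * X ^ (tri (n + 1) - k) =
      (1 - X ^ (n + 1)) * X ^ (tri n - l) := by
  have hl := l.isLt
  have ht := tri_succ n
  have hsplit : ∀ k : ℕ, C (if k = l then -1 else if k = l + (n + 1) then 1 else 0) *
      (X : ℤ[X]) ^ (tri (n + 1) - k) = (if k = l then -X ^ (tri (n + 1) - k) else 0) +
        (if k = l + (n + 1) then X ^ (tri (n + 1) - k) else 0) := by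
    intro k
    split_ifs <;> first | omega | simp
  simp only [Amat]
  rw [Fin.sum_univ_eq_sum_range
    (fun k => C (if k = l then -1 else if k = l + (n + 1) then 1 else 0) *
      (X : ℤ[X]) ^ (tri (n + 1) - k))]
  simp only [hsplit, sum_add_distrib, sum_ite_eq', mem_range]
  rw [if_pos (by omega), if_pos (by omega), show tri (n + 1) - l = tri n - l + (n + 1) by omega,
    show tri (n + 1) - (l + (n + 1)) = tri n - l by omega]
  ring

theorem revPoly_Amat_mulVec (n : ℕ) (v : Fin (tri n) → ℤ) :
    revPoly (n + 1) ((Amat (n + 1) n).mulVec v) = (1 - X ^ (n + 1)) * revPoly n v := by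
  simp only [revPoly, Matrix.mulVec, dotProduct, map_sum, map_mul, sum_mul, mul_sum]
  rw [sum_comm]
  refine sum_congr rfl fun l _ => ?_
  rw [mul_left_comm, ← sum_Amat_col n l, mul_sum]
  exact sum_congr rfl fun k _ => by ring

theorem revPoly_Ivec (n : ℕ) : revPoly (n + 1) (Ivec (n + 1)) = X ^ (n + 1) := by
  simp only [revPoly, Ivec, Nat.add_sub_cancel, apply_ite C, map_one, map_zero, ite_mul, one_mul,
    zero_mul]
  rw [Fin.sum_univ_eq_sum_range (fun k => if k = tri n then X ^ (tri (n + 1) - k) else (0 : ℤ[X])),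
    sum_ite_eq', if_pos (by rw [mem_range, tri_succ]; omega), tri_succ, Nat.add_sub_cancel_left]

theorem revPoly_Evec (n : ℕ) : revPoly n (Evec n) = eulerD X n X := by
  induction n with
  | zero =>
    have : IsEmpty (Fin (tri 0)) := Fin.isEmpty'
    exact Fintype.sum_empty _
  | succ n ih =>
    rcases n with _ | n
    · simpa [Evec, eulerD] using revPoly_Ivec 0
    · rw [Evec, revPoly_add_smul, revPoly_Amat_mulVec, ih, revPoly_Ivec]
      conv_rhs => rw [eulerD]
      rw [map_natCast]
      push_cast
      ring

/-- For every positive integer `n`, the entry of `E_n` in (1-based)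
position `t(n-1)+1` (i.e. `0`-based index `t(n-1)`) equals `d(n)`, the number of
positive divisors of `n`. -/
theorem Evec_entry_eq_card_divisors (n : ℕ) (hn : 0 < n) (k : Fin (tri n))
    (hk : (k : ℕ) = tri (n - 1)) :
    Evec n k = (n.divisors.card : ℤ) := by
  obtain ⟨m, rfl⟩ : ∃ m, n = m + 1 := ⟨n - 1, by omega⟩
  have hidx : tri (m + 1) - k = m + 1 := by
    rw [Nat.add_sub_cancel] at hk
    rw [hk, tri_succ, Nat.add_sub_cancel_left]
  rw [← coeff_revPoly _ (Evec _) k, hidx, revPoly_Evec, coeff_eulerD_X_self]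
end
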